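/- Every representable polymatroid is proportional to an entropic polymatroid: if P = ([N], f) is representable over a finite field F_q, then the vector (f(A)·log₂ q : A ⊆ [N], A ≠ ∅) is the entropy vector of some collection of N discrete random variables. -/

import Mathlib

/-!
Let `φ` be a uniformly random linear functional on `F^r` and let `X_i` encode its restriction
to `V_i`. The tuple `X_A` determines exactly the restriction of `φ` to `W = ⨆_{i ∈ A} V_i`, i.e.
the coset of `φ` modulo the annihilator of `W`. All these cosets are equally likely and there
are `|Dual W| = q ^ dim W` of them, so `H(X_A) = dim W · log₂ q`.
-/

/-- Joint Shannon entropy (in bits) of a discrete random variable `f` on a finite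
probability space with mass function `p`. -/
noncomputable def jointEntropy {Ω β : Type*} [Fintype Ω] [DecidableEq β]
    (p : Ω → ℝ) (f : Ω → β) : ℝ :=
  - ∑ b ∈ Finset.univ.image f,
      (∑ ω ∈ Finset.univ.filter (fun ω => f ω = b), p ω) *
        Real.logb 2 (∑ ω ∈ Finset.univ.filter (fun ω => f ω = b), p ω)

/-- The tuple of random variables `X_A = (X_i : i ∈ A)`. -/
def restrictRV {Ω : Type*} {N : ℕ} (X : Fin N → Ω → ℕ) (A : Finset (Fin N)) (ω : Ω) :
    Fin N → Option ℕ :=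
  fun i => if i ∈ A then some (X i ω) else none

open Finset Module

section Entropy

variable {Ω β : Type*} [Fintype Ω] [DecidableEq β]

theorem jointEntropy_eq_sum (p : Ω → ℝ) (g : Ω → β) :
    jointEntropy p g = -∑ ω, p ω * Real.logb 2 (∑ ω' with g ω' = g ω, p ω') := by
  rw [jointEntropy, ← sum_fiberwise_of_maps_to (g := g) (t := univ.image g)
    (fun ω _ => mem_image_of_mem g (mem_univ ω))]
  congr 1
  refine sum_congr rfl fun b _ => ?_
  rw [sum_mul]
  refine sum_congr rfl fun ω hω => ?_
  rw [(mem_filter.1 hω).2]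

theorem jointEntropy_uniform_of_card_fiber (g : Ω → β) (k : ℕ)
    (hk : ∀ ω, #{ω' | g ω' = g ω} = k) :
    jointEntropy (fun _ => (Fintype.card Ω : ℝ)⁻¹) g = Real.logb 2 (Fintype.card Ω / k) := by
  rcases isEmpty_or_nonempty Ω with hΩ | hΩ
  · simp [jointEntropy_eq_sum]
  have hfiber : ∀ ω, ∑ ω' with g ω' = g ω, (Fintype.card Ω : ℝ)⁻¹ = k / Fintype.card Ω := by
    intro ω
    rw [sum_const, hk, nsmul_eq_mul, div_eq_mul_inv]
  simp only [jointEntropy_eq_sum, hfiber, sum_const, card_univ, nsmul_eq_mul]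
  rw [← mul_assoc, mul_inv_cancel₀ (Nat.cast_ne_zero.2 Fintype.card_ne_zero), one_mul,
    ← Real.logb_inv, inv_div]

end Entropy

theorem restrictRV_eq_iff {Ω : Type*} {N : ℕ} (X : Fin N → Ω → ℕ) (A : Finset (Fin N))
    (ω ω' : Ω) : restrictRV X A ω = restrictRV X A ω' ↔ ∀ i ∈ A, X i ω = X i ω' := by
  simp only [restrictRV, funext_iff]
  refine forall_congr' fun i => ?_
  by_cases hi : i ∈ A <;> simp [hi]

theorem Submodule.mem_dualAnnihilator_biSup_iff {R M ι : Type*} [CommSemiring R]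
    [AddCommMonoid M] [Module R M] (A : Finset ι) (W : ι → Submodule R M) (φ : Dual R M) :
    φ ∈ (⨆ i ∈ A, W i).dualAnnihilator ↔ ∀ i ∈ A, φ ∈ (W i).dualAnnihilator := by
  simp only [Submodule.dualAnnihilator_iSup_eq, Submodule.mem_iInf]

theorem card_filter_sub_mem {Ω M : Type*} [Fintype Ω] [AddGroup M] (e : Ω ≃ M)
    (U : AddSubgroup M) [DecidablePred (· ∈ U)] (y : M) : #{ω | e ω - y ∈ U} = Nat.card U := by
  rw [← Fintype.card_subtype, ← Nat.card_eq_fintype_card]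
  exact Nat.card_congr ((e.subtypeEquiv fun _ => Iff.rfl).trans
    ((Equiv.subRight y).subtypeEquiv fun _ => Iff.rfl))

section FiniteDimensional

variable {F E : Type*} [Field F] [AddCommGroup E] [Module F E] [FiniteDimensional F E]

theorem Subspace.natCard_quot_dualAnnihilator (W : Subspace F E) :
    Nat.card (Dual F E ⧸ W.dualAnnihilator) = Nat.card F ^ finrank F W := by
  rw [Nat.card_congr W.quotAnnihilatorEquiv.toEquiv, Module.natCard_eq_pow_finrank (K := F),
    Subspace.dual_finrank_eq]

variable [Finite F]

instance Module.Dual.finite : Finite (Dual F E) := Module.finite_of_finite F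

theorem exists_restrictRV_eq_iff_sub_mem_dualAnnihilator {Ω : Type*} {N : ℕ} (e : Ω ≃ Dual F E)
    (W : Fin N → Submodule F E) :
    ∃ X : Fin N → Ω → ℕ, ∀ A ω ω', restrictRV X A ω = restrictRV X A ω' ↔
      e ω - e ω' ∈ (⨆ i ∈ A, W i).dualAnnihilator := by
  choose enc henc using fun i => exists_injective_nat (Dual F (W i))
  refine ⟨fun i ω => enc i ((W i).dualRestrict (e ω)), fun A ω ω' => ?_⟩
  simp only [restrictRV_eq_iff, (henc _).eq_iff, ← LinearMap.sub_mem_ker_iff,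
    Submodule.dualRestrict_ker_eq_dualAnnihilator, Submodule.mem_dualAnnihilator_biSup_iff]

end FiniteDimensional

/-- every representable polymatroid is proportional to an entropic
polymatroid: scaling by `log₂ q` yields an entropy vector. -/
theorem representable_proportional_entropic
    {F : Type*} [Field F] [Fintype F] {q N r : ℕ}
    (hq : Fintype.card F = q)
    (V : Fin N → Submodule F (Fin r → F))
    (f : Finset (Fin N) → ℕ)
    (hf : ∀ S : Finset (Fin N), f S = Module.finrank F ↥(⨆ i ∈ S, V i)) :
    ∃ (m : ℕ) (p : Fin m → ℝ) (X : Fin N → Fin m → ℕ),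
      (∀ ω, 0 ≤ p ω) ∧ (∑ ω, p ω = 1) ∧
      ∀ A : Finset (Fin N), A.Nonempty →
        jointEntropy p (restrictRV X A) = (f A : ℝ) * Real.logb 2 q := by
  classical
  let M := Dual F (Fin r → F)
  obtain ⟨X, hX⟩ := exists_restrictRV_eq_iff_sub_mem_dualAnnihilator (Finite.equivFin M).symm V
  refine ⟨Nat.card M, fun _ => (Fintype.card (Fin (Nat.card M)) : ℝ)⁻¹, X,
    fun _ => by positivity, ?_, fun A _ => ?_⟩
  · rw [sum_const, card_univ, nsmul_eq_mul, mul_inv_cancel₀]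
    exact Nat.cast_ne_zero.2 Fintype.card_ne_zero
  set U := (⨆ i ∈ A, V i).dualAnnihilator
  have hfiber (ω) : #{ω' | restrictRV X A ω' = restrictRV X A ω} = Nat.card U := by
    simp only [hX]
    exact card_filter_sub_mem _ U.toAddSubgroup _
  have hU : (Nat.card U : ℝ) ≠ 0 :=
    Nat.cast_ne_zero.2 (Nat.card_ne_zero.2 ⟨inferInstance, inferInstance⟩)
  have hcard : (Nat.card M : ℝ) / Nat.card U = (q : ℝ) ^ f A := by
    rw [Submodule.card_eq_card_quotient_mul_card U, Nat.cast_mul, mul_div_cancel_left₀ _ hU,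
      Subspace.natCard_quot_dualAnnihilator, Nat.card_eq_fintype_card, hq, ← hf, Nat.cast_pow]
  rw [jointEntropy_uniform_of_card_fiber _ _ hfiber, Fintype.card_fin, hcard, Real.logb_pow]
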